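/- arXiv:1007.4853 — 9 statements merged into one kernel-verified Lean document; each statement's English description precedes it below -/
import Mathlib

section
/- Let A : ℕ → ℝ be an arrival flow with A(t) → ∞ as t → ∞, and let γ : ℕ → ℝ be a minimum arrival curve for A. Then for all real numbers 0 ≤ x ≤ y, one has sup{t ∈ ℕ : A(t) ≤ y} − inf{t ∈ ℕ : A(t) ≥ x} ≤ sup{d ∈ ℕ : γ(d) ≤ y − x} (the left-hand side being an integer difference, possibly negative). -/
open Filter

/-!
Let `T` be the left pseudo-inverse of `A` at `y` and `S` the right pseudo-inverse at `x`.
If `S < T`, then `A S ≥ x` (as `A t → ∞`) and `A T ≤ y` (a nonzero supremum in `ℕ` is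
attained, since the junk value of `sSup` is `0`), so the arrival-curve inequality on `[S, T]`
gives `γ (T - S) ≤ y - x`: the delay `T - S` occurs in the supremum. Otherwise the difference
is nonpositive and the delay `0` qualifies, since `γ 0 ≤ A t - A t = 0`.
-/

theorem Nat.sSup_mem_of_ne_zero {s : Set ℕ} (h : sSup s ≠ 0) : sSup s ∈ s := by
  have hbdd : BddAbove s := by
    by_contra hs
    exact h (by rw [csSup_of_not_bddAbove hs, csSup_empty]; rfl)
  have hne : s.Nonempty := by
    by_contra hs
    exact h (by rw [Set.not_nonempty_iff_eq_empty.mp hs, csSup_empty]; rfl)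
  exact Nat.sSup_mem hne hbdd

theorem le_sub_of_minArrivalCurve {A γ : ℕ → ℝ} (hγ : ∀ s t : ℕ, s ≤ t → γ (t - s) ≤ A t - A s)
    {x y : ℝ} {s t : ℕ} (hst : s ≤ t) (hs : x ≤ A s) (ht : A t ≤ y) : γ (t - s) ≤ y - x := by
  linarith [hγ s t hst]

theorem minArrivalCurve_zero_nonpos {A γ : ℕ → ℝ}
    (hγ : ∀ s t : ℕ, s ≤ t → γ (t - s) ≤ A t - A s) : γ 0 ≤ 0 := by
  simpa using hγ 0 0 le_rfl

theorem coe_int_le_iSup_of_le_mem {D : Set ℕ} {n : ℤ} {d : ℕ} (hd : d ∈ D) (hn : n ≤ d) :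
    (((n : ℝ)) : EReal) ≤ ⨆ d ∈ D, ((d : ℝ) : EReal) :=
  le_trans (EReal.coe_le_coe_iff.mpr (by exact_mod_cast hn))
    (le_iSup₂ (f := fun (d : ℕ) (_ : d ∈ D) => ((d : ℝ) : EReal)) d hd)

theorem stmt_0_general (A : ℕ → ℝ)
    (htend : Tendsto A atTop atTop)
    (γ : ℕ → ℝ) (hγ : ∀ s t : ℕ, s ≤ t → γ (t - s) ≤ A t - A s)
    (x y : ℝ) (hxy : x ≤ y) :
    (((((sSup {t : ℕ | A t ≤ y} : ℕ) : ℤ) - ((sInf {t : ℕ | x ≤ A t} : ℕ) : ℤ) : ℤ) : ℝ) : EReal) ≤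
      ⨆ d ∈ {d : ℕ | γ d ≤ y - x}, ((d : ℝ) : EReal) := by
  set T := sSup {t : ℕ | A t ≤ y}
  set S := sInf {t : ℕ | x ≤ A t}
  refine coe_int_le_iSup_of_le_mem (d := T - S) ?_ (by omega)
  rcases le_or_gt T S with hTS | hST
  · show γ (T - S) ≤ y - x
    rw [Nat.sub_eq_zero_of_le hTS]
    linarith [minArrivalCurve_zero_nonpos hγ]
  · have hT : A T ≤ y := Nat.sSup_mem_of_ne_zero ((Nat.zero_le S).trans_lt hST).ne'
    have hS : x ≤ A S := Nat.sInf_mem (htend.eventually_ge_atTop x).exists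
    exact le_sub_of_minArrivalCurve hγ hST.le hS hT

/-- For an arrival flow `A` tending to infinity with minimum arrival
curve `γ`, for all reals `0 ≤ x ≤ y`, the left pseudo-inverse of `A` at `y` minus
the right pseudo-inverse of `A` at `x` is at most `sup {d : γ d ≤ y - x}`
(the latter possibly infinite, hence stated in `EReal`). -/
theorem stmt_0 (A : ℕ → ℝ) (hmono : Monotone A) (hA0 : A 0 = 0)
    (htend : Tendsto A atTop atTop)
    (γ : ℕ → ℝ) (hγ : ∀ s t : ℕ, s ≤ t → γ (t - s) ≤ A t - A s)
    (x y : ℝ) (hx : 0 ≤ x) (hxy : x ≤ y) :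
    (((((sSup {t : ℕ | A t ≤ y} : ℕ) : ℤ) - ((sInf {t : ℕ | x ≤ A t} : ℕ) : ℤ) : ℤ) : ℝ) : EReal) ≤
      ⨆ d ∈ {d : ℕ | γ d ≤ y - x}, ((d : ℝ) : EReal) :=
  stmt_0_general A htend γ hγ x y hxy
end

section
/- Let A : ℕ → ℝ be an arrival flow with A(t) → ∞ as t → ∞, and let Γ : ℕ → ℝ be a maximum arrival curve for A. Then for all real numbers 0 ≤ x < y, one has inf{t ∈ ℕ : A(t) ≥ y} − sup{t ∈ ℕ : A(t) ≤ x} ≥ inf{d ∈ ℕ : Γ(d) ≥ y − x}. -/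
open Filter

/-!
The last instant `S` with `A S ≤ x` comes strictly before the first instant `T` with
`y ≤ A T`, and the arrival curve gives `y - x ≤ A T - A S ≤ Γ (T - S)`. So `T - S` is one of
the delays over which `Γ` reaches `y - x`, and it bounds their infimum.
-/

namespace Monotone

variable {α : Type*} [LinearOrder α] {A : ℕ → α} {x y : α}

theorem bddAbove_setOf_le_of_lt (hA : Monotone A) (hxy : x < y) {t₀ : ℕ} (ht₀ : y ≤ A t₀) :
    BddAbove {t | A t ≤ x} :=
  ⟨t₀, fun _ hs => (hA.reflect_lt (lt_of_le_of_lt hs (hxy.trans_le ht₀))).le⟩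

theorem sSup_setOf_le_lt_sInf_setOf_ge (hA : Monotone A) (hxy : x < y)
    (hlow : {t | A t ≤ x}.Nonempty) (hup : {t | y ≤ A t}.Nonempty) :
    sSup {t | A t ≤ x} < sInf {t | y ≤ A t} :=
  have hbdd := hA.bddAbove_setOf_le_of_lt hxy hup.some_mem
  hA.reflect_lt <| calc
    A (sSup {t | A t ≤ x}) ≤ x := Nat.sSup_mem hlow hbdd
    _ < y := hxy
    _ ≤ A (sInf {t | y ≤ A t}) := Nat.sInf_mem hup

end Monotone

/-- For an arrival flow `A` tending to infinity with maximum arrival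
curve `Γ`, for all reals `0 ≤ x < y`, the right pseudo-inverse of `A` at `y` minus
the left pseudo-inverse of `A` at `x` is at least `inf {d : Γ d ≥ y - x}`. -/
theorem stmt_1 (A : ℕ → ℝ) (hmono : Monotone A) (hA0 : A 0 = 0)
    (htend : Tendsto A atTop atTop)
    (Γ : ℕ → ℝ) (hΓ : ∀ s t : ℕ, s ≤ t → A t - A s ≤ Γ (t - s))
    (x y : ℝ) (hx : 0 ≤ x) (hxy : x < y) :
    ((sInf {d : ℕ | y - x ≤ Γ d} : ℕ) : ℤ) ≤
      ((sInf {t : ℕ | y ≤ A t} : ℕ) : ℤ) - ((sSup {t : ℕ | A t ≤ x} : ℕ) : ℤ) := by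
  have hup : {t | y ≤ A t}.Nonempty := (htend.eventually_ge_atTop y).exists
  have hlow : {t | A t ≤ x}.Nonempty := ⟨0, show A 0 ≤ x from hA0 ▸ hx⟩
  have hST := hmono.sSup_setOf_le_lt_sInf_setOf_ge hxy hlow hup
  have hΓST : y - x ≤ Γ (sInf {t | y ≤ A t} - sSup {t | A t ≤ x}) := by
    have hAS : A (sSup {t | A t ≤ x}) ≤ x :=
      Nat.sSup_mem hlow (hmono.bddAbove_setOf_le_of_lt hxy hup.some_mem)
    have hAT : y ≤ A (sInf {t | y ≤ A t}) := Nat.sInf_mem hup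
    linarith [hΓ _ _ hST.le]
  rw [← Nat.cast_sub hST.le]
  exact_mod_cast Nat.sInf_le hΓST
end

section
/- (Packetization.) Let A, Ā : ℕ → ℝ be nondecreasing functions with Ā ≤ A pointwise, let ω : ℕ → ℝ be nondecreasing with ω(0) = 0, and suppose ω is a minimum service curve, i.e. Ā(t) ≥ min_{0 ≤ s ≤ t} (A(s) + ω(t − s)) for all t. Let Q : ℝ → ℝ be nondecreasing with Q(x) ≤ x and x − Q(x) ≤ l for all x, where l ≥ 0. Then for all t, Q(Ā(t)) ≥ min_{0 ≤ s ≤ t} ( Q(A(s)) + max(ω(t − s) − l, 0) ); that is, t ↦ (ω(t) − l)⁺ is a minimum service curve for the packetized flow Q ∘ A with output Q ∘ Ā. -/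
/-- min-plus convolution over ℕ: `(f * g)(t) = min_{0 ≤ s ≤ t} (f s + g (t - s))`. -/
noncomputable def minConv (f g : ℕ → ℝ) (t : ℕ) : ℝ :=
  (Finset.Iic t).inf' Finset.nonempty_Iic (fun s => f s + g (t - s))

/-!
Take `s ≤ t` attaining the minimum in the service-curve inequality, so `A s + ω (t - s) ≤ Ā t`.
If `ω (t - s) ≤ l` the packetized term is just `Q (A s) ≤ Q (Ā t)` by monotonicity. Otherwise
packetizing loses nothing at the input and at most `l` at the output:
`Q (A s) + ω (t - s) - l ≤ A s + ω (t - s) - l ≤ Ā t - l ≤ Q (Ā t)`.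
-/

theorem minConv_le (f g : ℕ → ℝ) {s t : ℕ} (hs : s ≤ t) : minConv f g t ≤ f s + g (t - s) :=
  Finset.inf'_le _ (Finset.mem_Iic.mpr hs)

theorem exists_minConv_eq (f g : ℕ → ℝ) (t : ℕ) :
    ∃ s ≤ t, minConv f g t = f s + g (t - s) := by
  obtain ⟨s, hs, heq⟩ := Finset.exists_mem_eq_inf' (Finset.nonempty_Iic (a := t))
    (fun s => f s + g (t - s))
  exact ⟨s, Finset.mem_Iic.mp hs, heq⟩

theorem add_max_sub_zero_le_of_packetizer {Q : ℝ → ℝ} (hQ : Monotone Q) {l : ℝ}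
    (hQ1 : ∀ x, Q x ≤ x) (hQ2 : ∀ x, x - Q x ≤ l) (x : ℝ) {w : ℝ} (hw : 0 ≤ w) :
    Q x + max (w - l) 0 ≤ Q (x + w) := by
  rcases le_total w l with hwl | hlw
  · rw [max_eq_right (by linarith), add_zero]
    exact hQ (by linarith)
  · rw [max_eq_left (by linarith)]
    linarith [hQ1 x, hQ2 (x + w)]

theorem stmt_2_general (A Abar : ℕ → ℝ)
    (ω : ℕ → ℝ) (hω : Monotone ω) (hω0 : ω 0 = 0)
    (hserv : ∀ t, minConv A ω t ≤ Abar t)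
    (Q : ℝ → ℝ) (hQ : Monotone Q) (l : ℝ)
    (hQ1 : ∀ x : ℝ, Q x ≤ x) (hQ2 : ∀ x : ℝ, x - Q x ≤ l) :
    ∀ t, minConv (fun s => Q (A s)) (fun d => max (ω d - l) 0) t ≤ Q (Abar t) := by
  intro t
  obtain ⟨s, hst, hmin⟩ := exists_minConv_eq A ω t
  have hω_nonneg : 0 ≤ ω (t - s) := hω0 ▸ hω (Nat.zero_le _)
  calc minConv (fun s => Q (A s)) (fun d => max (ω d - l) 0) t
      ≤ Q (A s) + max (ω (t - s) - l) 0 := minConv_le _ _ hst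
    _ ≤ Q (A s + ω (t - s)) := add_max_sub_zero_le_of_packetizer hQ hQ1 hQ2 _ hω_nonneg
    _ ≤ Q (Abar t) := hQ (hmin ▸ hserv t)

/-- Packetization: if `ω` is a minimum service curve for input `A`
with output `Ā`, and `Q` is a packetizer with maximum packet length `l`, then
`t ↦ (ω t - l)⁺` is a minimum service curve for the packetized flow `Q ∘ A` with
output `Q ∘ Ā`. -/
theorem stmt_2 (A Abar : ℕ → ℝ) (hA : Monotone A) (hAbar : Monotone Abar)
    (hle : ∀ t, Abar t ≤ A t)
    (ω : ℕ → ℝ) (hω : Monotone ω) (hω0 : ω 0 = 0)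
    (hserv : ∀ t, minConv A ω t ≤ Abar t)
    (Q : ℝ → ℝ) (hQ : Monotone Q) (l : ℝ) (hl : 0 ≤ l)
    (hQ1 : ∀ x : ℝ, Q x ≤ x) (hQ2 : ∀ x : ℝ, x - Q x ≤ l) :
    ∀ t, minConv (fun s => Q (A s)) (fun d => max (ω d - l) 0) t ≤ Q (Abar t) :=
  stmt_2_general A Abar ω hω hω0 hserv Q hQ l hQ1 hQ2
end

section
/- Let L : ℕ → ℝ be a sequence of packet lengths with L(j) > 0 for all j and Σ_j L(j) = ∞, let 𝒫 : ℝ≥0 → ℕ be the induced packet operator 𝒫(x) = max{n : Σ_{j=1}^n L(j) ≤ x}, and let 𝒫⁻(n) = Σ_{j=1}^n L(j) be its data operator. If Π : ℝ≥0 → ℝ is a maximum packet curve for 𝒫, then for all naturals p ≤ q: 𝒫⁻(q) − 𝒫⁻(p) ≥ inf{d ≥ 0 : Π(d) ≥ q − p}. -/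
open Filter

/-- Cumulative length of the first `n` packets: `𝒫⁻(n) = Σ_{j=1}^n L j`. -/
noncomputable def cumLen (L : ℕ → ℝ) (n : ℕ) : ℝ := ∑ j ∈ Finset.range n, L j

/-- The packet operator `𝒫(x) = max {n : Σ_{j=1}^n L j ≤ x}`. -/
noncomputable def packOp (L : ℕ → ℝ) (x : ℝ) : ℕ := sSup {n : ℕ | cumLen L n ≤ x}

/-! A maximum packet curve `Π` bounds the packets between the data points `𝒫⁻(p) ≤ 𝒫⁻(q)`:
since `𝒫 (𝒫⁻ n) = n`, it gives `q - p ≤ Π (𝒫⁻(q) - 𝒫⁻(p))`, so `𝒫⁻(q) - 𝒫⁻(p)` lies in the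
set whose infimum is taken. -/

section PacketLengths

variable {L : ℕ → ℝ}

lemma cumLen_nonneg (hL : ∀ j, 0 ≤ L j) (n : ℕ) : 0 ≤ cumLen L n :=
  Finset.sum_nonneg fun j _ => hL j

lemma cumLen_strictMono (hL : ∀ j, 0 < L j) : StrictMono (cumLen L) :=
  strictMono_nat_of_lt_succ fun n => by
    simpa only [cumLen, Finset.sum_range_succ, lt_add_iff_pos_right] using hL n

lemma packOp_cumLen (hL : ∀ j, 0 < L j) (n : ℕ) : packOp L (cumLen L n) = n := by
  have hset : {m : ℕ | cumLen L m ≤ cumLen L n} = Set.Iic n := by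
    ext m
    exact (cumLen_strictMono hL).le_iff_le
  rw [packOp, hset, csSup_Iic]

lemma natCast_sub_le_apply_cumLen_sub (hL : ∀ j, 0 < L j) {Pmax : ℝ → ℝ}
    (hPmax : ∀ x y : ℝ, 0 ≤ x → x ≤ y →
      ((packOp L y : ℝ) - (packOp L x : ℝ)) ≤ Pmax (y - x))
    {p q : ℕ} (hpq : p ≤ q) :
    (q : ℝ) - p ≤ Pmax (cumLen L q - cumLen L p) := by
  have h := hPmax (cumLen L p) (cumLen L q) (cumLen_nonneg (fun j => (hL j).le) p)
    ((cumLen_strictMono hL).monotone hpq)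
  rwa [packOp_cumLen hL, packOp_cumLen hL] at h

end PacketLengths

theorem stmt_3_general (L : ℕ → ℝ) (hL : ∀ j, 0 < L j)
    (Pmax : ℝ → ℝ)
    (hPmax : ∀ x y : ℝ, 0 ≤ x → x ≤ y →
      ((packOp L y : ℝ) - (packOp L x : ℝ)) ≤ Pmax (y - x)) :
    ∀ p q : ℕ, p ≤ q →
      sInf {d : ℝ | 0 ≤ d ∧ ((q : ℝ) - (p : ℝ)) ≤ Pmax d} ≤ cumLen L q - cumLen L p := by
  intro p q hpq
  have hdata : 0 ≤ cumLen L q - cumLen L p :=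
    sub_nonneg.mpr ((cumLen_strictMono hL).monotone hpq)
  exact csInf_le ⟨0, fun d hd => hd.1⟩ ⟨hdata, natCast_sub_le_apply_cumLen_sub hL hPmax hpq⟩

/-- if `Π` is a maximum packet curve for the packet operator induced by
positive packet lengths with divergent sum, then for naturals `p ≤ q`,
`𝒫⁻(q) - 𝒫⁻(p) ≥ inf {d ≥ 0 : Π d ≥ q - p}`. -/
theorem stmt_3 (L : ℕ → ℝ) (hL : ∀ j, 0 < L j)
    (hdiv : Tendsto (cumLen L) atTop atTop)
    (Pmax : ℝ → ℝ)
    (hPmax : ∀ x y : ℝ, 0 ≤ x → x ≤ y →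
      ((packOp L y : ℝ) - (packOp L x : ℝ)) ≤ Pmax (y - x)) :
    ∀ p q : ℕ, p ≤ q →
      sInf {d : ℝ | 0 ≤ d ∧ ((q : ℝ) - (p : ℝ)) ≤ Pmax d} ≤ cumLen L q - cumLen L p :=
  stmt_3_general L hL Pmax hPmax
end

section
/- Let A : ℕ → ℝ≥0 be an arrival flow with minimum arrival curve γ : ℕ → ℝ≥0, let 𝒫 : ℝ≥0 → ℕ be nondecreasing, and let π : ℝ≥0 → ℝ be a nondecreasing minimum packet curve for 𝒫. Then π ∘ γ is a minimum arrival curve for the packet flow P = 𝒫 ∘ A, i.e. 𝒫(A(t)) − 𝒫(A(s)) ≥ π(γ(t − s)) for all naturals s ≤ t. -/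
open scoped NNReal

theorem stmt_6_general (A : ℕ → ℝ≥0) (hA : Monotone A)
    (γ : ℕ → ℝ≥0) (hγ : ∀ s t : ℕ, s ≤ t → γ (t - s) ≤ A t - A s)
    (P : ℝ≥0 → ℕ)
    (pimin : ℝ≥0 → ℝ) (hpiMono : Monotone pimin)
    (hpi : ∀ x y : ℝ≥0, x ≤ y → pimin (y - x) ≤ ((P y : ℝ) - (P x : ℝ))) :
    ∀ s t : ℕ, s ≤ t → pimin (γ (t - s)) ≤ ((P (A t) : ℝ) - (P (A s) : ℝ)) :=
  fun s t hst => (hpiMono (hγ s t hst)).trans (hpi (A s) (A t) (hA hst))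

/-- if `γ` is a minimum arrival curve for the arrival flow `A` and `π` is a
nondecreasing minimum packet curve for the nondecreasing packet operator `𝒫`, then
`π ∘ γ` is a minimum arrival curve for the packet flow `𝒫 ∘ A`. -/
theorem stmt_6 (A : ℕ → ℝ≥0) (hA : Monotone A) (hA0 : A 0 = 0)
    (γ : ℕ → ℝ≥0) (hγ : ∀ s t : ℕ, s ≤ t → γ (t - s) ≤ A t - A s)
    (P : ℝ≥0 → ℕ) (hP : Monotone P)
    (pimin : ℝ≥0 → ℝ) (hpiMono : Monotone pimin)
    (hpi : ∀ x y : ℝ≥0, x ≤ y → pimin (y - x) ≤ ((P y : ℝ) - (P x : ℝ))) :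
    ∀ s t : ℕ, s ≤ t → pimin (γ (t - s)) ≤ ((P (A t) : ℝ) - (P (A s) : ℝ)) :=
  stmt_6_general A hA γ hγ P pimin hpiMono hpi
end

section
/- Let A, Ā : ℕ → ℝ≥0 be nondecreasing with Ā ≤ A pointwise, and let ω : ℕ → ℝ≥0 be a strict service curve for A: for all naturals s ≤ t such that Ā(u) < A(u) for every u with s < u ≤ t, one has Ā(t) − Ā(s) ≥ ω(t − s). Let 𝒫̄ : ℝ≥0 → ℝ and let κ : ℝ≥0 → ℝ be nondecreasing with 𝒫̄(y) − 𝒫̄(x) ≥ κ(y − x) for all 0 ≤ x ≤ y. Then κ ∘ ω is a strict service curve for the packet flow: for all s ≤ t with Ā(u) < A(u) for every u in (s, t], one has 𝒫̄(Ā(t)) − 𝒫̄(Ā(s)) ≥ κ(ω(t − s)). -/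
theorem stmt_11_general (A Abar : ℕ → ℝ) (hAbar : Monotone Abar)
    (hAbarpos : ∀ t, 0 ≤ Abar t)
    (ω : ℕ → ℝ)
    (hstrict : ∀ s t : ℕ, s ≤ t → (∀ u, s < u → u ≤ t → Abar u < A u) →
      ω (t - s) ≤ Abar t - Abar s)
    (Pbar : ℝ → ℝ) (κ : ℝ → ℝ) (hκ : Monotone κ)
    (hκcurve : ∀ x y : ℝ, 0 ≤ x → x ≤ y → κ (y - x) ≤ Pbar y - Pbar x) :
    ∀ s t : ℕ, s ≤ t → (∀ u, s < u → u ≤ t → Abar u < A u) →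
      κ (ω (t - s)) ≤ Pbar (Abar t) - Pbar (Abar s) := by
  intro s t hst hbacklog
  calc κ (ω (t - s)) ≤ κ (Abar t - Abar s) := hκ (hstrict s t hst hbacklog)
    _ ≤ Pbar (Abar t) - Pbar (Abar s) := hκcurve _ _ (hAbarpos s) (hAbar hst)

/-- if `ω` is a strict service curve for the data flow `A` with output `Ā`,
and `κ` is a nondecreasing minimum packet curve for the output packet operator `𝒫̄`,
then `κ ∘ ω` is a strict service curve for the output packet flow `𝒫̄ ∘ Ā`. -/
theorem stmt_11 (A Abar : ℕ → ℝ) (hA : Monotone A) (hAbar : Monotone Abar)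
    (hApos : ∀ t, 0 ≤ A t) (hAbarpos : ∀ t, 0 ≤ Abar t)
    (hle : ∀ t, Abar t ≤ A t)
    (ω : ℕ → ℝ) (hωpos : ∀ d, 0 ≤ ω d)
    (hstrict : ∀ s t : ℕ, s ≤ t → (∀ u, s < u → u ≤ t → Abar u < A u) →
      ω (t - s) ≤ Abar t - Abar s)
    (Pbar : ℝ → ℝ) (κ : ℝ → ℝ) (hκ : Monotone κ)
    (hκcurve : ∀ x y : ℝ, 0 ≤ x → x ≤ y → κ (y - x) ≤ Pbar y - Pbar x) :
    ∀ s t : ℕ, s ≤ t → (∀ u, s < u → u ≤ t → Abar u < A u) →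
      κ (ω (t - s)) ≤ Pbar (Abar t) - Pbar (Abar s) :=
  stmt_11_general A Abar hAbar hAbarpos ω hstrict Pbar κ hκ hκcurve
end

section
/- (Window flow control, small window.) Let R, T, z be positive reals with z ≤ RT. Then for every real t ≥ 0, inf over integers n ≥ 1 of ( n·z + R·(t − n·T)⁺ ) is at least (z/T)·t. Consequently, the sub-additive closure of the function t ↦ z + R(t − T)⁺ (which equals the min-plus convolution I_z * ω for ω(t) = R(t − T)⁺) is bounded below by the rate-(z/T) line. -/
/-! A sustained rate `r ≤ R` cannot outrun the rate-latency curve started from the point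
`(u, r * u)`: before `u` it lies below `r * u`, after `u` it grows no faster than `R`.
With `r = z / T` and `u = n * T` the point `(n * T, n * z)` is on the line, so every term
`n * z + R * (t - n * T)⁺` dominates `(z / T) * t`. -/

theorem mul_le_mul_add_mul_max_sub_zero {r R : ℝ} (hr : 0 ≤ r) (hrR : r ≤ R) (t u : ℝ) :
    r * t ≤ r * u + R * max (t - u) 0 :=
  calc r * t = r * u + r * (t - u) := by ring
    _ ≤ r * u + r * max (t - u) 0 := by gcongr; exact le_max_left _ _
    _ ≤ r * u + R * max (t - u) 0 := by gcongr

theorem stmt_16_general (R T z : ℝ) (hT : 0 < T) (hz : 0 < z) (hzRT : z ≤ R * T) :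
    ∀ t : ℝ, 0 ≤ t →
      (z / T) * t ≤
        sInf {v : ℝ | ∃ n : ℕ, 1 ≤ n ∧ v = (n : ℝ) * z + R * max (t - (n : ℝ) * T) 0} := by
  intro t _
  refine le_csInf ⟨_, 1, le_rfl, rfl⟩ ?_
  rintro v ⟨n, -, rfl⟩
  have hrate : z / T ≤ R := (div_le_iff₀ hT).2 hzRT
  calc z / T * t ≤ z / T * (n * T) + R * max (t - n * T) 0 :=
        mul_le_mul_add_mul_max_sub_zero (div_nonneg hz.le hT.le) hrate t _
    _ = n * z + R * max (t - n * T) 0 := by field_simp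

/-- Window flow control, small window: for `0 < z ≤ RT`, the infimum
over integers `n ≥ 1` of `n·z + R·(t − n·T)⁺` is at least `(z/T)·t`; hence the
sub-additive closure of `t ↦ z + R(t − T)⁺` is bounded below by the rate-`z/T` line. -/
theorem stmt_16 (R T z : ℝ) (hR : 0 < R) (hT : 0 < T) (hz : 0 < z) (hzRT : z ≤ R * T) :
    ∀ t : ℝ, 0 ≤ t →
      (z / T) * t ≤
        sInf {v : ℝ | ∃ n : ℕ, 1 ≤ n ∧ v = (n : ℝ) * z + R * max (t - (n : ℝ) * T) 0} :=
  stmt_16_general R T z hT hz hzRT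
end

section
/- (Window flow control, large window.) Let R, T, z be positive reals with z ≥ RT. Then for every real t ≥ 0, the infimum over integers n ≥ 0 of ( n·z + R·(t − (n+1)·T)⁺ ) equals R·(t − T)⁺; i.e., a window of size z ≥ RT does not degrade the (R,T) service curve: ω * (I_z * ω)* = ω for ω(t) = R(t − T)⁺. -/
/-! Delaying the rate-latency curve `R (t - T)⁺` by `d ≥ 0` lowers it by at most `R d`,
so the `n`-th term `n z + R (t - (n+1) T)⁺` exceeds the `0`-th one by at least
`n (z - R T) ≥ 0`: the infimum is attained at `n = 0`. -/

lemma rateLatency_le_delayed_add {R T d : ℝ} (hR : 0 ≤ R) (hd : 0 ≤ d) (t : ℝ) :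
    R * max (t - T) 0 ≤ R * max (t - (T + d)) 0 + R * d := by
  rw [← mul_add]
  refine mul_le_mul_of_nonneg_left (max_le ?_ ?_) hR
  · linarith [le_max_left (t - (T + d)) 0]
  · linarith [le_max_right (t - (T + d)) 0]

lemma rateLatency_le_window_term {R T z : ℝ} (hR : 0 ≤ R) (hT : 0 ≤ T) (hRT : R * T ≤ z)
    (n : ℕ) (t : ℝ) :
    R * max (t - T) 0 ≤ n * z + R * max (t - (n + 1) * T) 0 := by
  have hn : (0 : ℝ) ≤ n := n.cast_nonneg
  calc R * max (t - T) 0 ≤ R * max (t - (T + n * T)) 0 + n * (R * T) := by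
        rw [mul_left_comm]; exact rateLatency_le_delayed_add hR (mul_nonneg hn hT) t
    _ ≤ R * max (t - (T + n * T)) 0 + n * z := by gcongr
    _ = n * z + R * max (t - (n + 1) * T) 0 := by ring_nf

theorem stmt_17_general (R T z : ℝ) (hR : 0 < R) (hT : 0 < T) (hzRT : R * T ≤ z) :
    ∀ t : ℝ, 0 ≤ t →
      sInf {v : ℝ | ∃ n : ℕ, v = (n : ℝ) * z + R * max (t - ((n : ℝ) + 1) * T) 0}
        = R * max (t - T) 0 := by
  intro t _
  refine IsLeast.csInf_eq ⟨⟨0, by simp⟩, ?_⟩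
  rintro v ⟨n, rfl⟩
  exact rateLatency_le_window_term hR.le hT.le hzRT n t

/-- Window flow control, large window: for `z ≥ RT > 0`, the infimum
over integers `n ≥ 0` of `n·z + R·(t − (n+1)·T)⁺` equals `R·(t − T)⁺`; i.e. a window
of size `z ≥ RT` does not degrade the `(R,T)` service curve: `ω * (I_z * ω)* = ω`. -/
theorem stmt_17 (R T z : ℝ) (hR : 0 < R) (hT : 0 < T) (hz : 0 < z) (hzRT : R * T ≤ z) :
    ∀ t : ℝ, 0 ≤ t →
      sInf {v : ℝ | ∃ n : ℕ, v = (n : ℝ) * z + R * max (t - ((n : ℝ) + 1) * T) 0}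
        = R * max (t - T) 0 :=
  stmt_17_general R T z hR hT hzRT
end

section
/- Let A : ℕ → ℝ be an arrival flow that admits at least one maximum arrival curve, and define Γ_A(d) = sup_{s ≥ 0}( A(s + d) − A(s) ) (the min-plus deconvolution A ⊘ A). Then: (i) Γ_A is a maximum arrival curve for A; (ii) Γ_A ≤ Γ pointwise for every maximum arrival curve Γ of A (so Γ_A is the best, i.e. smallest, maximum arrival curve); and (iii) Γ_A is sub-additive: Γ_A(d + e) ≤ Γ_A(d) + Γ_A(e) for all d, e ∈ ℕ. -/
/-! Every increment `A (u + d) - A u` is bounded by `Γ d` for any maximum arrival curve `Γ`, so the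
supremum over `u` exists, lies below every such `Γ`, and by construction bounds every increment of
length `d`. Sub-additivity follows by splitting an increment of length `d + e` at `u + d`. -/

def IsMaxArrivalCurve (A Γ : ℕ → ℝ) : Prop :=
  ∀ s t : ℕ, s ≤ t → A t - A s ≤ Γ (t - s)

noncomputable def selfDeconv (A : ℕ → ℝ) (d : ℕ) : ℝ :=
  ⨆ u : ℕ, (A (u + d) - A u)

namespace IsMaxArrivalCurve

variable {A Γ : ℕ → ℝ}

theorem increment_le (hΓ : IsMaxArrivalCurve A Γ) (u d : ℕ) : A (u + d) - A u ≤ Γ d := by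
  simpa using hΓ u (u + d) (Nat.le_add_right u d)

theorem bddAbove_increments (hΓ : IsMaxArrivalCurve A Γ) (d : ℕ) :
    BddAbove (Set.range fun u : ℕ => A (u + d) - A u) :=
  ⟨Γ d, Set.forall_mem_range.2 fun u => hΓ.increment_le u d⟩

theorem selfDeconv_le (hΓ : IsMaxArrivalCurve A Γ) : selfDeconv A ≤ Γ :=
  fun d => ciSup_le fun u => hΓ.increment_le u d

theorem increment_le_selfDeconv (hΓ : IsMaxArrivalCurve A Γ) (u d : ℕ) :
    A (u + d) - A u ≤ selfDeconv A d :=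
  le_ciSup (hΓ.bddAbove_increments d) u

theorem selfDeconv_isMaxArrivalCurve (hΓ : IsMaxArrivalCurve A Γ) :
    IsMaxArrivalCurve A (selfDeconv A) := by
  intro s t hst
  simpa [Nat.add_sub_cancel' hst] using hΓ.increment_le_selfDeconv s (t - s)

theorem selfDeconv_add_le (hΓ : IsMaxArrivalCurve A Γ) (d e : ℕ) :
    selfDeconv A (d + e) ≤ selfDeconv A d + selfDeconv A e := by
  refine ciSup_le fun u => ?_
  have first := hΓ.increment_le_selfDeconv u d
  have second := hΓ.increment_le_selfDeconv (u + d) e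
  rw [add_assoc] at second
  linarith

end IsMaxArrivalCurve

theorem stmt_19_general (A : ℕ → ℝ)
    (Γ0 : ℕ → ℝ) (hΓ0 : ∀ s t : ℕ, s ≤ t → A t - A s ≤ Γ0 (t - s)) :
    (∀ s t : ℕ, s ≤ t → A t - A s ≤ ⨆ u : ℕ, (A (u + (t - s)) - A u)) ∧
    (∀ Γ : ℕ → ℝ, (∀ s t : ℕ, s ≤ t → A t - A s ≤ Γ (t - s)) →
      ∀ d : ℕ, (⨆ u : ℕ, (A (u + d) - A u)) ≤ Γ d) ∧
    (∀ d e : ℕ, (⨆ u : ℕ, (A (u + (d + e)) - A u)) ≤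
      (⨆ u : ℕ, (A (u + d) - A u)) + (⨆ u : ℕ, (A (u + e) - A u))) := by
  have hΓ0 : IsMaxArrivalCurve A Γ0 := hΓ0
  exact ⟨hΓ0.selfDeconv_isMaxArrivalCurve,
    fun _ hΓ => IsMaxArrivalCurve.selfDeconv_le hΓ,
    hΓ0.selfDeconv_add_le⟩

/-- for an arrival flow `A` admitting some maximum arrival curve, the
min-plus deconvolution `Γ_A(d) = sup_s (A(s+d) − A(s))` (i) is a maximum arrival curve
for `A`, (ii) is pointwise minimal among maximum arrival curves of `A`, and (iii) is
sub-additive. -/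
theorem stmt_19 (A : ℕ → ℝ) (hA : Monotone A) (hA0 : A 0 = 0)
    (Γ0 : ℕ → ℝ) (hΓ0 : ∀ s t : ℕ, s ≤ t → A t - A s ≤ Γ0 (t - s)) :
    (∀ s t : ℕ, s ≤ t → A t - A s ≤ ⨆ u : ℕ, (A (u + (t - s)) - A u)) ∧
    (∀ Γ : ℕ → ℝ, (∀ s t : ℕ, s ≤ t → A t - A s ≤ Γ (t - s)) →
      ∀ d : ℕ, (⨆ u : ℕ, (A (u + d) - A u)) ≤ Γ d) ∧
    (∀ d e : ℕ, (⨆ u : ℕ, (A (u + (d + e)) - A u)) ≤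
      (⨆ u : ℕ, (A (u + d) - A u)) + (⨆ u : ℕ, (A (u + e) - A u))) :=
  stmt_19_general A Γ0 hΓ0
end
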